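/- Let k be a field of prime characteristic p, let P be a finite p-group, and let E be a finite abelian group of order prime to p acting on P by automorphisms with [P,E] = P. Then: (i) every E-stable k-linear map f : kP → k(P⋊E) satisfying the Leibniz rule f(ab) = f(a)b + a f(b) for all a,b ∈ kP (products in k(P⋊E)) has image contained in J(k(P⋊E)); (ii) every class in HH^1(k(P⋊E)) is represented by a derivation f on k(P⋊E) which vanishes on kE, and any derivation on k(P⋊E) vanishing on kE has image contained in J(k(P⋊E)). -/

import Mathlib

/-!
Let `ε = augE : k(P⋊E) → kE` be induced by the projection `P⋊E → E`. Its kernel lies in the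
radical: `P` is a normal `p`-subgroup, so by orbit counting it fixes a nonzero vector of every
simple module, the fixed vectors form a submodule, and hence `P` acts trivially on every simple
module. For a Leibniz map `f : kP → k(P⋊E)`, `u ↦ ε (f u)` is a homomorphism from `P` to the
additive group of `kE`, invariant under `E` because `kE` is commutative; it therefore vanishes on
`[P,E] = P`, so `ε ∘ f = 0`. A derivation of `k(P⋊E)` vanishing on `kE` restricts to such a map
on `kP`. Finally, averaging over `E` gives `c = |E|⁻¹ ∑ₑ f(e) e⁻¹`, and `f - [c,-]` vanishes
on `kE`.
-/

namespace HHPaper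

open MonoidAlgebra

attribute [local instance] LieRing.ofAssociativeRing

section Derivations

variable {k A : Type*} [CommRing k] [Ring A] [Algebra k A]

/-- `f` is a derivation on the associative unital `k`-algebra `A`. -/
def IsDerivation (f : Module.End k A) : Prop :=
  ∀ a b : A, f (a * b) = f a * b + a * f b

lemma IsDerivation.add {f g : Module.End k A} (hf : IsDerivation f) (hg : IsDerivation g) :
    IsDerivation (f + g) := by
  intro a b
  simp only [LinearMap.add_apply, hf a b, hg a b, add_mul, mul_add]
  abel

lemma IsDerivation.zero : IsDerivation (0 : Module.End k A) := by
  intro a b; simp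

lemma IsDerivation.smul (c : k) {f : Module.End k A} (hf : IsDerivation f) :
    IsDerivation (c • f) := by
  intro a b
  simp only [LinearMap.smul_apply, hf a b, smul_add, smul_mul_assoc, mul_smul_comm]

lemma IsDerivation.lie {f g : Module.End k A} (hf : IsDerivation f) (hg : IsDerivation g) :
    IsDerivation ⁅f, g⁆ := by
  intro a b
  simp only [Ring.lie_def, LinearMap.sub_apply, Module.End.mul_apply]
  rw [hg a b, hf a b, map_add, map_add, hf (g a) b, hf a (g b), hg (f a) b, hg a (f b)]
  simp only [sub_mul, mul_sub, add_mul, mul_add]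
  abel

variable (k A) in
/-- The Lie algebra of derivations on `A`, as a Lie subalgebra of `Module.End k A`. -/
def derivLie : LieSubalgebra k (Module.End k A) where
  carrier := {f | IsDerivation f}
  add_mem' := fun hf hg => hf.add hg
  zero_mem' := IsDerivation.zero
  smul_mem' := fun c _ hf => hf.smul c
  lie_mem' := fun hf hg => hf.lie hg

@[simp] lemma mem_derivLie {f : Module.End k A} :
    f ∈ derivLie k A ↔ IsDerivation f := Iff.rfl

variable (k) in
/-- The inner derivation `[c, -]` associated with `c : A`. -/
def innerDeriv (c : A) : Module.End k A :=
  LinearMap.mulLeft k c - LinearMap.mulRight k c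

@[simp] lemma innerDeriv_apply (c a : A) : innerDeriv k c a = c * a - a * c := rfl

lemma innerDeriv_isDerivation (c : A) : IsDerivation (innerDeriv k c) := by
  intro a b
  simp only [innerDeriv_apply, sub_mul, mul_sub, mul_assoc]
  abel

lemma innerDeriv_add (c d : A) :
    innerDeriv k (c + d) = innerDeriv k c + innerDeriv k d := by
  ext a; simp only [innerDeriv_apply, LinearMap.add_apply, add_mul, mul_add]; abel

lemma innerDeriv_smul (s : k) (c : A) :
    innerDeriv k (s • c) = s • innerDeriv k c := by
  ext a
  simp only [innerDeriv_apply, LinearMap.smul_apply, smul_sub, smul_mul_assoc, mul_smul_comm]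

lemma innerDeriv_zero : innerDeriv k (0 : A) = 0 := by
  ext a; simp

variable (k A) in
/-- The Lie ideal of inner derivations inside the Lie algebra of derivations. -/
def innerIdeal : LieIdeal k (derivLie k A) where
  carrier := {f | ∃ c : A, (f : Module.End k A) = innerDeriv k c}
  add_mem' := by
    rintro f g ⟨c, hc⟩ ⟨d, hd⟩
    exact ⟨c + d, by simp [innerDeriv_add, hc, hd]⟩
  zero_mem' := ⟨0, by simp [innerDeriv_zero]⟩
  smul_mem' := by
    rintro s f ⟨c, hc⟩
    exact ⟨s • c, by rw [innerDeriv_smul]; rw [← hc]; rfl⟩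
  lie_mem := by
    rintro x m ⟨c, hc⟩
    refine ⟨(x : Module.End k A) c, ?_⟩
    have hx : IsDerivation (x : Module.End k A) := x.2
    ext a
    have hb : ((⁅x, m⁆ : derivLie k A) : Module.End k A) =
        ⁅(x : Module.End k A), (m : Module.End k A)⁆ := rfl
    rw [hb, hc]
    simp only [Ring.lie_def, LinearMap.sub_apply, Module.End.mul_apply, innerDeriv_apply,
      map_sub, hx c a, hx a c]
    abel

variable (k A) in
/-- First Hochschild cohomology of `A`, as the quotient Lie algebra of derivations
modulo inner derivations. -/
abbrev HH1 := (derivLie k A) ⧸ (innerIdeal k A)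

variable (k A) in
/-- The Jacobson radical of `A`, regarded as a `k`-subspace of `A`. -/
def jacRad : Submodule k A :=
  Submodule.restrictScalars k (Ideal.jacobson (⊥ : Ideal A))

variable (k A) in
/-- The Lie subalgebra of derivations with image contained in the `m`-th power of
the Jacobson radical. -/
def derivRadLie (m : ℕ) : LieSubalgebra k (Module.End k A) where
  carrier := {f | IsDerivation f ∧ LinearMap.range f ≤ (jacRad k A) ^ m}
  add_mem' := by
    rintro f g ⟨hf, hf'⟩ ⟨hg, hg'⟩
    refine ⟨hf.add hg, ?_⟩
    rintro x ⟨a, rfl⟩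
    exact add_mem (hf' ⟨a, rfl⟩) (hg' ⟨a, rfl⟩)
  zero_mem' := ⟨IsDerivation.zero, by rintro x ⟨a, rfl⟩; simp⟩
  smul_mem' := by
    rintro s f ⟨hf, hf'⟩
    refine ⟨hf.smul s, ?_⟩
    rintro x ⟨a, rfl⟩
    exact Submodule.smul_mem _ s (hf' ⟨a, rfl⟩)
  lie_mem' := by
    rintro f g ⟨hf, hf'⟩ ⟨hg, hg'⟩
    refine ⟨hf.lie hg, ?_⟩
    rintro x ⟨a, rfl⟩
    have : ⁅f, g⁆ a = f (g a) - g (f a) := by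
      simp [Ring.lie_def, Module.End.mul_apply]
    rw [this]
    exact sub_mem (hf' ⟨g a, rfl⟩) (hg' ⟨f a, rfl⟩)

@[simp] lemma mem_derivRadLie {m : ℕ} {f : Module.End k A} :
    f ∈ derivRadLie k A m ↔ IsDerivation f ∧ LinearMap.range f ≤ (jacRad k A) ^ m := Iff.rfl

variable (k A) in
/-- The Loewy length of `A`: the least positive `n` with `J(A)^n = 0`. -/
noncomputable def loewyLength : ℕ :=
  sInf {n : ℕ | 0 < n ∧ (jacRad k A) ^ n = ⊥}

/-- A semisimple-style multiplicity freeness: any two isomorphic simple submodules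
coincide. -/
def IsMultiplicityFree (R M : Type*) [Ring R] [AddCommGroup M] [Module R M] : Prop :=
  ∀ S T : Submodule R M, IsSimpleModule R S → IsSimpleModule R T →
    Nonempty (S ≃ₗ[R] T) → S = T

end Derivations


section GroupAlgebra

open MonoidAlgebra

variable (k : Type*) [CommRing k] {P E : Type*} [Group P] [Group E]

/-- The subgroup `[P,E]` generated by the elements `(ᵉu)u⁻¹`. -/
def commSubgroupE (φ : E →* MulAut P) : Subgroup P :=
  Subgroup.closure {x : P | ∃ (e : E) (u : P), x = φ e u * u⁻¹}

/-- A linear endomorphism of `kP` is `E`-stable if it commutes with the `E`-action. -/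
def IsEStable (φ : E →* MulAut P) (f : Module.End k (MonoidAlgebra k P)) : Prop :=
  ∀ (e : E) (a : MonoidAlgebra k P),
    f (MonoidAlgebra.domCongr k k (φ e) a) = MonoidAlgebra.domCongr k k (φ e) (f a)

/-- The Lie algebra `Der(kP)^E` of `E`-stable derivations on the group algebra `kP`. -/
def eStableDerivLie (φ : E →* MulAut P) :
    LieSubalgebra k (Module.End k (MonoidAlgebra k P)) where
  carrier := {f | IsDerivation f ∧ IsEStable k φ f}
  add_mem' := by
    rintro f g ⟨hf, hf'⟩ ⟨hg, hg'⟩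
    exact ⟨hf.add hg, fun e a => by simp [LinearMap.add_apply, hf' e a, hg' e a]⟩
  zero_mem' := ⟨IsDerivation.zero, fun e a => by simp⟩
  smul_mem' := by
    rintro s f ⟨hf, hf'⟩
    refine ⟨hf.smul s, fun e a => ?_⟩
    simp only [LinearMap.smul_apply, hf' e a, map_smul]
  lie_mem' := by
    rintro f g ⟨hf, hf'⟩ ⟨hg, hg'⟩
    refine ⟨hf.lie hg, fun e a => ?_⟩
    simp only [Ring.lie_def, LinearMap.sub_apply, Module.End.mul_apply, hf' e, hg' e, map_sub]

@[simp] lemma mem_eStableDerivLie {φ : E →* MulAut P} {f : Module.End k (MonoidAlgebra k P)} :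
    f ∈ eStableDerivLie k φ ↔ IsDerivation f ∧ IsEStable k φ f := Iff.rfl

end GroupAlgebra

section Commutant

variable (k : Type*) [CommRing k] {Q : Type*} [AddCommGroup Q] [Module k Q]
  {E : Type*} [Group E]

/-- The Lie subalgebra of `Module.End k Q` of endomorphisms commuting with a given
`E`-action, i.e. `End_{kE}(Q)`. -/
def commutantLie (ρ : E →* (Q ≃ₗ[k] Q)) : LieSubalgebra k (Module.End k Q) where
  carrier := {g | ∀ (e : E) (x : Q), g (ρ e x) = ρ e (g x)}
  add_mem' := by
    intro f g hf hg e x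
    simp [LinearMap.add_apply, hf e x, hg e x]
  zero_mem' := by intro e x; simp
  smul_mem' := by
    intro s f hf e x
    simp [LinearMap.smul_apply, hf e x]
  lie_mem' := by
    intro f g hf hg e x
    simp only [Ring.lie_def, LinearMap.sub_apply, Module.End.mul_apply, hf e, hg e, map_sub]

end Commutant

section SDP

open SemidirectProduct

variable (k : Type*) [CommRing k] {P E : Type*} [Group P] [Group E] (φ : E →* MulAut P)

/-- The canonical embedding of `kP` into `k(P⋊E)`. -/
noncomputable abbrev iotaP : MonoidAlgebra k P →ₐ[k] MonoidAlgebra k (P ⋊[φ] E) :=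
  MonoidAlgebra.mapDomainAlgHom k k (SemidirectProduct.inl : P →* P ⋊[φ] E)

/-- Conjugation by `e ∈ E` on `k(P⋊E)`. -/
noncomputable def conjE (e : E) (x : MonoidAlgebra k (P ⋊[φ] E)) :
    MonoidAlgebra k (P ⋊[φ] E) :=
  MonoidAlgebra.single (inr e : P ⋊[φ] E) 1 * x * MonoidAlgebra.single (inr e⁻¹ : P ⋊[φ] E) 1

end SDP


theorem _root_.IsPGroup.exists_fixed_ne_zero {p : ℕ} [Fact p.Prime] {P S : Type*} [Group P]
    [Finite P] (hP : IsPGroup p P) [AddCommGroup S] [Nontrivial S] [DistribMulAction P S]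
    (htor : ∀ s : S, p • s = 0) : ∃ v : S, v ≠ 0 ∧ ∀ u : P, u • v = v := by
  have _ : Module (ZMod p) S := AddCommGroup.zmodModule htor
  obtain ⟨s, hs⟩ := exists_ne (0 : S)
  -- orbit counting needs a finite `P`-set: the `𝔽_p`-span of the orbit of `s`
  let F : Submodule (ZMod p) S := Submodule.span (ZMod p) (Set.range fun u : P => u • s)
  have hF : ∀ (u : P) (v : S), v ∈ F → u • v ∈ F := by
    intro u v hv
    induction hv using Submodule.span_induction with
    | mem x hx =>
      obtain ⟨w, rfl⟩ := hx
      exact Submodule.subset_span ⟨u * w, mul_smul u w s⟩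
    | zero => rw [smul_zero]; exact F.zero_mem
    | add x y _ _ hx hy => rw [smul_add]; exact F.add_mem hx hy
    | smul r x _ hx =>
      rw [show u • r • x = r • u • x from ZMod.map_smul (DistribSMul.toAddMonoidHom S u) r x]
      exact F.smul_mem r hx
  let F' : SubMulAction P S := ⟨F, fun u _ => hF u _⟩
  have : Module.Finite (ZMod p) F := Module.Finite.span_of_finite _ (Set.finite_range _)
  have : Finite F' := Module.finite_of_finite (ZMod p) (M := F)
  have hsF : s ∈ F := Submodule.subset_span ⟨1, one_smul P s⟩
  have hpF : p ∣ Nat.card F' := by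
    have h := addOrderOf_dvd_natCard (⟨s, hsF⟩ : F)
    rwa [addOrderOf_eq_prime (x := (⟨s, hsF⟩ : F)) (Subtype.ext (htor s))
      (fun h => hs congr(Subtype.val $h))] at h
  obtain ⟨v, hv, hv0⟩ := hP.exists_fixed_point_of_prime_dvd_card_of_fixed_point F' hpF
    (a := ⟨0, F.zero_mem⟩) (fun u => Subtype.ext (smul_zero u))
  exact ⟨v, fun h => hv0 (Subtype.ext h.symm), fun u => congrArg Subtype.val (hv u)⟩

theorem _root_.MonoidAlgebra.single_one_smul_eq_self_of_mem {k G S : Type*} [CommRing k] {p : ℕ}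
    [Fact p.Prime] [CharP k p] [Group G] {N : Subgroup G} [N.Normal] [Finite N]
    (hN : IsPGroup p N) [AddCommGroup S] [Module (MonoidAlgebra k G) S]
    [IsSimpleModule (MonoidAlgebra k G) S] {n : G} (hn : n ∈ N) (s : S) :
    single n (1 : k) • s = s := by
  let _ : DistribMulAction N S := .compHom S ((of k G).comp N.subtype)
  have : Nontrivial S := IsSimpleModule.nontrivial (MonoidAlgebra k G) S
  have htor (s : S) : p • s = 0 := by
    rw [← Nat.cast_smul_eq_nsmul (MonoidAlgebra k G), ← map_natCast (algebraMap k _),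
      CharP.cast_eq_zero, map_zero, zero_smul]
  obtain ⟨v, hv0, hv⟩ := hN.exists_fixed_ne_zero htor
  -- the `N`-fixed vectors form a submodule since `N` is normal
  have hconj (n : N) (g : G) (c : k) : single (n : G) (1 : k) * single g c =
      single g c * single (g⁻¹ * n * g) 1 := by
    simp only [single_mul_single, one_mul, mul_one, mul_assoc, mul_inv_cancel_left]
  let V : Submodule (MonoidAlgebra k G) S :=
    { carrier := {v | ∀ n : N, single (n : G) (1 : k) • v = v}
      add_mem' := fun ha hb n => by rw [smul_add, ha n, hb n]
      zero_mem' := fun n => smul_zero _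
      smul_mem' := by
        intro a v hv n
        induction a using MonoidAlgebra.induction_linear with
        | zero => rw [zero_smul, smul_zero]
        | add a b ha hb => rw [add_smul, smul_add, ha, hb]
        | single g c =>
          rw [← mul_smul, hconj, mul_smul, hv ⟨_, ‹N.Normal›.conj_mem' _ n.2 g⟩] }
  have hV : V = ⊤ := (eq_bot_or_eq_top V).resolve_left fun h =>
    hv0 ((Submodule.eq_bot_iff V).mp h v fun n => hv n)
  exact (hV ▸ Submodule.mem_top : s ∈ V) ⟨n, hn⟩

theorem _root_.MonoidAlgebra.mem_jacobson_of_mapDomain_eq_zero {k G H : Type*} [CommRing k]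
    {p : ℕ} [Fact p.Prime] [CharP k p] [Group G] [Group H] {π : G →* H}
    (hπ : Function.Surjective π) [Finite π.ker] (hker : IsPGroup p π.ker)
    {x : MonoidAlgebra k G} (hx : mapDomain π x = 0) :
    x ∈ (⊥ : Ideal (MonoidAlgebra k G)).jacobson := by
  refine Submodule.mem_sInf.mpr fun M ⟨_, hM⟩ => ?_
  have : IsSimpleModule _ (MonoidAlgebra k G ⧸ M) :=
    isSimpleModule_iff_isCoatom.mpr (Ideal.isMaximal_def.mp hM)
  -- on a simple module, `g` acts as any other element of its coset `g · ker π`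
  have hact (a : MonoidAlgebra k G) (s : MonoidAlgebra k G ⧸ M) :
      a • s = mapDomain (Function.surjInv hπ) (mapDomain π a) • s := by
    induction a using induction_linear with
    | zero => simp
    | add a b ha hb => rw [add_smul, ha, hb, mapDomain_add, mapDomain_add, add_smul]
    | single g c =>
      set g' := Function.surjInv hπ (π g)
      have hmem : g'⁻¹ * g ∈ π.ker := by
        rw [MonoidHom.mem_ker, map_mul, map_inv, Function.surjInv_eq hπ, inv_mul_cancel]
      have hg : single g c = single g' c * single (g'⁻¹ * g) 1 := by
        rw [single_mul_single, mul_inv_cancel_left, mul_one]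
      rw [mapDomain_single, mapDomain_single, hg, mul_smul,
        single_one_smul_eq_self_of_mem hker hmem]
  have h := hact x (Submodule.Quotient.mk 1)
  rwa [hx, mapDomain_zero, zero_smul, ← Submodule.Quotient.mk_smul, smul_eq_mul, mul_one,
    Submodule.Quotient.mk_eq_zero] at h

theorem commSubgroupE_le_ker {P E Q : Type*} [Group P] [Group E] [Group Q] {φ : E →* MulAut P}
    {χ : P →* Q} (hχ : ∀ e u, χ (φ e u) = χ u) : commSubgroupE φ ≤ χ.ker :=
  (Subgroup.closure_le _).mpr fun _ ⟨e, u, hx⟩ => by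
    rw [hx, SetLike.mem_coe, MonoidHom.mem_ker, map_mul, map_inv, hχ, mul_inv_cancel]

theorem IsDerivation.apply_eq_innerDeriv_average {k A E : Type*} [CommRing k] [Ring A]
    [Algebra k A] [Group E] [Fintype E] [Invertible (Fintype.card E : k)]
    {f : Module.End k A} (hf : IsDerivation f) (ρ : E →* A) (e₀ : E) :
    f (ρ e₀) = innerDeriv k (⅟(Fintype.card E : k) • ∑ e, f (ρ e) * ρ e⁻¹) (ρ e₀) := by
  set S := ∑ e, f (ρ e) * ρ e⁻¹
  have hterm (e : E) :
      ρ e₀ * (f (ρ e) * ρ e⁻¹) = f (ρ (e₀ * e)) * ρ (e₀ * e)⁻¹ * ρ e₀ - f (ρ e₀) := by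
    have h₁ : ρ (e₀ * e)⁻¹ * ρ e₀ = ρ e⁻¹ := by rw [← map_mul]; group
    have h₂ : ρ e * ρ e⁻¹ = 1 := by rw [← map_mul, mul_inv_cancel, map_one]
    rw [mul_assoc _ (ρ (e₀ * e)⁻¹), h₁, map_mul, hf, add_mul, mul_assoc (f (ρ e₀)), h₂, mul_one,
      mul_assoc, add_sub_cancel_left]
  have hS : ρ e₀ * S = S * ρ e₀ - Fintype.card E • f (ρ e₀) := by
    rw [Finset.mul_sum, Finset.sum_congr rfl fun e _ => hterm e, Finset.sum_sub_distrib,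
      Finset.sum_const, Finset.card_univ, Finset.sum_mul]
    congr 1
    exact Equiv.sum_comp (Equiv.mulLeft e₀) fun e => f (ρ e) * ρ e⁻¹ * ρ e₀
  rw [innerDeriv_apply, smul_mul_assoc, mul_smul_comm, ← smul_sub, hS, sub_sub_cancel,
    ← Nat.cast_smul_eq_nsmul k, smul_smul, invOf_mul_self, one_smul]

section SemidirectProduct

open SemidirectProduct

variable {k : Type*} [CommRing k] {P E : Type*} [Group P] [Group E] {φ : E →* MulAut P}

variable (k φ) in
noncomputable abbrev augE : MonoidAlgebra k (P ⋊[φ] E) →ₐ[k] MonoidAlgebra k E :=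
  mapDomainAlgHom k k rightHom

theorem augE_single (g : P ⋊[φ] E) (c : k) : augE k φ (single g c) = single g.right c := by
  simp

theorem augE_iotaP_single (u : P) (c : k) : augE k φ (iotaP k φ (single u c)) = single 1 c := by
  simp

theorem iotaP_domCongr (e : E) (a : MonoidAlgebra k P) :
    iotaP k φ (domCongr k k (φ e) a) = conjE k φ e (iotaP k φ a) := by
  induction a using MonoidAlgebra.induction_linear with
  | zero => simp [conjE]
  | add a b ha hb => simp only [map_add, ha, hb, conjE, mul_add, add_mul]
  | single u c => simp [conjE, single_mul_single, inl_aut]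

theorem single_eq_iotaP_mul (g : P ⋊[φ] E) (c : k) :
    single g c = iotaP k φ (single g.left c) * single (inr g.right) 1 := by
  simp [single_mul_single]

theorem mem_jacRad_of_augE_eq_zero {p : ℕ} [Fact p.Prime] [CharP k p] [Finite P]
    (hP : IsPGroup p P) {x : MonoidAlgebra k (P ⋊[φ] E)} (hx : augE k φ x = 0) :
    x ∈ jacRad k (MonoidAlgebra k (P ⋊[φ] E)) := by
  let eP : P ≃* (rightHom : P ⋊[φ] E →* E).ker :=
    (MonoidHom.ofInjective inl_injective).trans (.subgroupCongr range_inl_eq_ker_rightHom)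
  have : Finite (rightHom : P ⋊[φ] E →* E).ker := .of_equiv _ eP.toEquiv
  have hker := hP.of_equiv eP
  exact (Submodule.restrictScalars_mem _ _ _).mpr
    (mem_jacobson_of_mapDomain_eq_zero rightHom_surjective hker hx)

end SemidirectProduct

section CommGroup

open SemidirectProduct

variable {k : Type*} [CommRing k] {P E : Type*} [Group P] [CommGroup E] {φ : E →* MulAut P}

theorem augE_conjE (e : E) (x : MonoidAlgebra k (P ⋊[φ] E)) :
    augE k φ (conjE k φ e x) = augE k φ x := by
  rw [conjE, map_mul, map_mul, augE_single, augE_single, right_inr, right_inr, mul_comm,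
    ← mul_assoc, single_mul_single, inv_mul_cancel, mul_one, ← one_def, one_mul]

theorem augE_apply_eq_zero_of_leibniz (hPE : commSubgroupE φ = ⊤)
    {f : MonoidAlgebra k P →ₗ[k] MonoidAlgebra k (P ⋊[φ] E)}
    (hf : ∀ a b, f (a * b) = f a * iotaP k φ b + iotaP k φ a * f b)
    (hfE : ∀ e a, f (domCongr k k (φ e) a) = conjE k φ e (f a)) (a : MonoidAlgebra k P) :
    augE k φ (f a) = 0 := by
  let χ : P →* Multiplicative (MonoidAlgebra k E) :=
    .mk' (fun u => .ofAdd (augE k φ (f (single u 1)))) fun u v => by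
      have huv : single (u * v) (1 : k) = single u 1 * single v 1 := by
        rw [single_mul_single, one_mul]
      rw [← ofAdd_add, huv, hf, map_add, map_mul, map_mul, augE_iotaP_single, augE_iotaP_single,
        ← one_def, mul_one, one_mul]
  have hχ (e : E) (u : P) : χ (φ e u) = χ u := by
    change Multiplicative.ofAdd _ = .ofAdd _
    rw [← domCongr_single (R := k) (φ e) u (1 : k), hfE, augE_conjE]
  have hχ_trivial (u : P) : augE k φ (f (single u 1)) = 0 :=
    congrArg Multiplicative.toAdd (commSubgroupE_le_ker hχ (hPE ▸ Subgroup.mem_top u) : χ u = 1)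
  induction a using induction_linear with
  | zero => simp
  | add a b ha hb => rw [map_add, map_add, ha, hb, add_zero]
  | single u c => rw [← mul_one c, ← smul_single', map_smul, map_smul, hχ_trivial, smul_zero]

theorem IsDerivation.conjE_comm {f : Module.End k (MonoidAlgebra k (P ⋊[φ] E))}
    (hf : IsDerivation f) (hfE : ∀ e : E, f (single (inr e) 1) = 0) (e : E)
    (x : MonoidAlgebra k (P ⋊[φ] E)) : f (conjE k φ e x) = conjE k φ e (f x) := by
  rw [conjE, conjE, hf, hf, hfE, hfE, zero_mul, zero_add, mul_zero, add_zero]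

theorem augE_apply_eq_zero_of_isDerivation (hPE : commSubgroupE φ = ⊤)
    {f : Module.End k (MonoidAlgebra k (P ⋊[φ] E))} (hf : IsDerivation f)
    (hfE : ∀ e : E, f (single (inr e) 1) = 0) (x : MonoidAlgebra k (P ⋊[φ] E)) :
    augE k φ (f x) = 0 := by
  have hfP (a : MonoidAlgebra k P) : augE k φ (f (iotaP k φ a)) = 0 :=
    augE_apply_eq_zero_of_leibniz (f := f ∘ₗ (iotaP k φ).toLinearMap) hPE
      (fun a b => by
        simp only [LinearMap.comp_apply, AlgHom.toLinearMap_apply, map_mul]; exact hf _ _)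
      (fun e a => by
        simp only [LinearMap.comp_apply, AlgHom.toLinearMap_apply, iotaP_domCongr,
          hf.conjE_comm hfE]) a
  induction x using induction_linear with
  | zero => simp
  | add x y hx hy => rw [map_add, map_add, hx, hy, add_zero]
  | single g c => rw [single_eq_iotaP_mul, hf, hfE, mul_zero, add_zero, map_mul, hfP, zero_mul]

end CommGroup

/-- Let `P` be a finite `p`-group and `E` a finite abelian `p'`-group acting
on `P` with `[P,E] = P`. Then: (i) every `E`-stable map `f : kP → k(P⋊E)` satisfying the
Leibniz rule has image contained in `J(k(P⋊E))`;
(ii) every class in `HH^1(k(P⋊E))` is represented by a derivation vanishing on `kE`, and any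
derivation on `k(P⋊E)` vanishing on `kE` has image contained in `J(k(P⋊E))`. -/
theorem stmt7 (k : Type*) [Field k] (p : ℕ) [Fact p.Prime] [CharP k p]
    (P : Type*) [Group P] [Fintype P] (hP : IsPGroup p P)
    (E : Type*) [CommGroup E] [Fintype E] (hE : ¬ p ∣ Fintype.card E)
    (φ : E →* MulAut P) (hPE : commSubgroupE φ = ⊤) :
    -- (i)
    (∀ f : MonoidAlgebra k P →ₗ[k] MonoidAlgebra k (P ⋊[φ] E),
      (∀ a b : MonoidAlgebra k P, f (a * b) = f a * iotaP k φ b + iotaP k φ a * f b) →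
      (∀ (e : E) (a : MonoidAlgebra k P),
        f (MonoidAlgebra.domCongr k k (φ e) a) = conjE k φ e (f a)) →
      LinearMap.range f ≤ jacRad k (MonoidAlgebra k (P ⋊[φ] E))) ∧
    -- (ii) every class has a representative vanishing on `kE` ...
    (∀ f : Module.End k (MonoidAlgebra k (P ⋊[φ] E)), IsDerivation f →
      ∃ c : MonoidAlgebra k (P ⋊[φ] E), ∀ e : E,
        (f - innerDeriv k c) (MonoidAlgebra.single (SemidirectProduct.inr e : P ⋊[φ] E) 1)
          = 0) ∧
    -- ... and any derivation vanishing on `kE` has image in `J(k(P⋊E))`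
    (∀ f : Module.End k (MonoidAlgebra k (P ⋊[φ] E)), IsDerivation f →
      (∀ e : E, f (MonoidAlgebra.single (SemidirectProduct.inr e : P ⋊[φ] E) 1) = 0) →
      LinearMap.range f ≤ jacRad k (MonoidAlgebra k (P ⋊[φ] E))) := by
  refine ⟨fun f hf hfE => ?_, fun f hf => ?_, fun f hf hfE => ?_⟩
  · rintro _ ⟨a, rfl⟩
    exact mem_jacRad_of_augE_eq_zero hP (augE_apply_eq_zero_of_leibniz hPE hf hfE a)
  · have : Invertible (Fintype.card E : k) :=
      invertibleOfNonzero fun h => hE ((CharP.cast_eq_zero_iff k p _).mp h)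
    exact ⟨_, fun e => sub_eq_zero.mpr
      (hf.apply_eq_innerDeriv_average ((of k _).comp SemidirectProduct.inr) e)⟩
  · rintro _ ⟨x, rfl⟩
    exact mem_jacRad_of_augE_eq_zero hP (augE_apply_eq_zero_of_isDerivation hPE hf hfE x)

end HHPaper
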